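/- arXiv:2311.13140 — 4 statements merged into one kernel-verified Lean document; each statement's English description precedes it below -/
import Mathlib

section
/- Let M = (1/2)·[[1,1,0,0],[1,1,0,0],[0,0,1,1],[0,0,1,1]] (a 4×4 real matrix) and let X = (1,0,0,0)ᵀ ∈ ℝ⁴. Then M is symmetric and idempotent (Mᵀ = M and M·M = M), so M is its own Moore–Penrose pseudoinverse (it satisfies M·M·M = M, (M·M)ᵀ = M·M). Furthermore Xᵀ·(M·M)·X = 1/2 while (Xᵀ·(M·M)·X)·(Xᵀ·(M·M)·X) = 1/4, and 1/2 > 1/4. Consequently, with T⁺TA = AT⁺T = (T⁺TA)⁺ = (AT⁺T)⁺ = M (which occurs for A = I₄ and the explicit T of the companion statement), the inequality Xᵀ(T⁺TA)⁺(T⁺TA)X ≤ Xᵀ(T⁺TA)⁺(AT⁺T)⁺X · Xᵀ(AT⁺T)(T⁺TA)X fails. -/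
/-!
The matrix `J` with two `2 × 2` blocks of ones satisfies `J * J = 2 • J`, so `M = J / 2` is a
symmetric idempotent, hence its own pseudoinverse. Testing against the first basis vector reads
off the diagonal entry `M 0 0 = 1/2`, and `1/2 > (1/2)^2`.
-/

open Matrix

theorem IsIdempotentElem.inv_smul_of_mul_self_eq_smul {K A : Type*} [Field K] [Ring A]
    [Algebra K A] {J : A} {c : K} (hc : c ≠ 0) (hJ : J * J = c • J) :
    IsIdempotentElem (c⁻¹ • J) := by
  rw [IsIdempotentElem, smul_mul_smul_comm, hJ, smul_smul, mul_assoc,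
    inv_mul_cancel₀ hc, mul_one]

theorem Matrix.quadForm_replicateCol_single {n ι R : Type*} [Fintype n] [DecidableEq n]
    [CommSemiring R] (A : Matrix n n R) (i : n) (k l : ι) :
    ((replicateCol ι (Pi.single i (1 : R)))ᵀ * A * replicateCol ι (Pi.single i (1 : R))) k l =
      A i i := by
  rw [Matrix.mul_assoc, ← replicateCol_mulVec, transpose_replicateCol,
    replicateRow_mul_replicateCol_apply, mulVec_single, single_dotProduct]
  simp

def pairedOnes (R : Type*) [Zero R] [One R] : Matrix (Fin 4) (Fin 4) R :=
  !![1, 1, 0, 0; 1, 1, 0, 0; 0, 0, 1, 1; 0, 0, 1, 1]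

theorem pairedOnes_transpose (R : Type*) [Zero R] [One R] :
    (pairedOnes R)ᵀ = pairedOnes R := by
  ext i j
  fin_cases i <;> fin_cases j <;> rfl

theorem pairedOnes_mul_self (R : Type*) [Semiring R] :
    pairedOnes R * pairedOnes R = (2 : R) • pairedOnes R := by
  ext i j
  fin_cases i <;> fin_cases j <;>
    simp [pairedOnes, mul_apply, Fin.sum_univ_four, one_add_one_eq_two]

theorem counterexample_inequality_fails :
    let M : Matrix (Fin 4) (Fin 4) ℝ :=
      (1/2 : ℝ) • !![1, 1, 0, 0; 1, 1, 0, 0; 0, 0, 1, 1; 0, 0, 1, 1]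
    let X : Matrix (Fin 4) (Fin 1) ℝ := !![1; 0; 0; 0]
    Mᵀ = M ∧ M * M = M ∧ M * M * M = M ∧ (M * M)ᵀ = M * M ∧
      (Xᵀ * (M * M) * X) 0 0 = 1/2 ∧
      ((Xᵀ * (M * M) * X) 0 0) * ((Xᵀ * (M * M) * X) 0 0) = 1/4 ∧
      (1/2 : ℝ) > 1/4 ∧
      ¬ ((Xᵀ * (M * M) * X) 0 0 ≤
          ((Xᵀ * (M * M) * X) 0 0) * ((Xᵀ * (M * M) * X) 0 0)) := by
  intro M X
  have hM : M = (2 : ℝ)⁻¹ • pairedOnes ℝ := by rw [← one_div]; rfl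
  have hX : X = replicateCol (Fin 1) (Pi.single 0 1) := by
    ext i j
    fin_cases i <;> fin_cases j <;> rfl
  have hidem : M * M = M := by
    rw [hM]
    exact IsIdempotentElem.inv_smul_of_mul_self_eq_smul two_ne_zero (pairedOnes_mul_self ℝ)
  have hsymm : Mᵀ = M := by rw [hM, transpose_smul, pairedOnes_transpose]
  have hquad : (Xᵀ * (M * M) * X) 0 0 = 1 / 2 := by
    rw [hidem, hX, quadForm_replicateCol_single, hM]
    norm_num [pairedOnes]
  refine ⟨hsymm, hidem, by rw [hidem, hidem], by rw [hidem, hsymm], hquad, ?_, by norm_num, ?_⟩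
  all_goals norm_num [hquad]
end

section
/- Let m ≥ 3 be an integer, let θ ∈ ℝ^m be arbitrary, and let μ be the product measure on ℝ^m (functions Fin m → ℝ) whose i-th factor is the Gaussian measure gaussianReal (θ i) 1. Then ∫ 1/‖x‖² dμ(x) ≤ 1, where ‖x‖² = Σᵢ xᵢ² is the squared Euclidean norm. -/
/-! Since `s⁻¹ = ∫₀^∞ e^{-ts} dt`, Tonelli gives `E ‖X‖⁻² ≤ ∫₀^∞ E e^{-t‖X‖²} dt`. The coordinates
are independent, and completing the square shows `E e^{-t Xᵢ²} ≤ (1 + 2t)^{-1/2}` whatever the mean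
of `Xᵢ`, so `E ‖X‖⁻² ≤ ∫₀^∞ (1 + 2t)^{-m/2} dt = 1 / (m - 2)`. -/

open MeasureTheory ProbabilityTheory Real Set Filter
open scoped ENNReal

lemma lintegral_fintype_prod_eq_prod {ι : Type*} [Fintype ι] {E : ι → Type*}
    [∀ i, MeasurableSpace (E i)] {μ : ∀ i, Measure (E i)} [∀ i, IsProbabilityMeasure (μ i)]
    {f : ∀ i, E i → ℝ≥0∞} (hf : ∀ i, Measurable (f i)) :
    ∫⁻ x, ∏ i, f i (x i) ∂Measure.pi μ = ∏ i, ∫⁻ y, f i y ∂μ i := by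
  rw [lintegral_prod_eq_prod_lintegral_of_indepFun _ _ (iIndepFun_pi fun i => (hf i).aemeasurable)
    fun i => (hf i).comp (measurable_pi_apply i)]
  exact Finset.prod_congr rfl fun i _ => (measurePreserving_eval μ i).lintegral_comp (hf i)

lemma lintegral_exp_neg_mul_Ioi {s : ℝ} (hs : 0 ≤ s) :
    ∫⁻ t in Ioi (0 : ℝ), ENNReal.ofReal (rexp (-(t * s))) = (ENNReal.ofReal s)⁻¹ := by
  rcases hs.eq_or_lt with rfl | hs
  · simp
  have hexp : ∀ t : ℝ, rexp (-(t * s)) = rexp (-s * t) := fun t => by ring_nf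
  simp_rw [hexp]
  rw [← ofReal_integral_eq_lintegral_ofReal (integrableOn_exp_mul_Ioi (by linarith) 0)
    (ae_of_all _ fun _ => (exp_pos _).le), integral_exp_mul_Ioi (by linarith),
    ← ENNReal.ofReal_inv_of_pos hs]
  congr 1
  rw [mul_zero, exp_zero, neg_div_neg_eq, one_div]

lemma lintegral_one_add_two_mul_rpow_neg_Ioi {p : ℝ} (hp : 1 < p) :
    ∫⁻ t in Ioi (0 : ℝ), ENNReal.ofReal ((1 + 2 * t) ^ (-p)) =
      ENNReal.ofReal (1 / (2 * (p - 1))) := by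
  have hp' : 1 - p ≠ 0 := by linarith
  have hderiv : ∀ x ∈ Ici (0 : ℝ),
      HasDerivAt (fun u => (1 + 2 * u) ^ (1 - p) / (2 * (1 - p))) ((1 + 2 * x) ^ (-p)) x := by
    intro x hx
    have hpos : 0 < 1 + 2 * x := by linarith [mem_Ici.mp hx]
    refine (((((hasDerivAt_id x).const_mul 2).const_add 1).rpow_const (p := 1 - p)
      (Or.inl hpos.ne')).div_const (2 * (1 - p))).congr_deriv ?_
    rw [id, sub_sub_cancel_left]
    field_simp
  have hlim : Tendsto (fun u : ℝ => (1 + 2 * u) ^ (1 - p) / (2 * (1 - p))) atTop (nhds 0) := by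
    have h := (tendsto_rpow_neg_atTop (y := p - 1) (by linarith)).comp
      (tendsto_atTop_add_const_left _ 1 (tendsto_id.const_mul_atTop two_pos))
    simpa using h.div_const (2 * (1 - p))
  have hnonneg : ∀ x ∈ Ioi (0 : ℝ), 0 ≤ (1 + 2 * x) ^ (-p) := fun x hx =>
    rpow_nonneg (by linarith [mem_Ioi.mp hx]) _
  rw [← ofReal_integral_eq_lintegral_ofReal (integrableOn_Ioi_deriv_of_nonneg' hderiv hnonneg hlim)
    ((ae_restrict_mem measurableSet_Ioi).mono hnonneg),
    integral_Ioi_of_hasDerivAt_of_nonneg' hderiv hnonneg hlim]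
  congr 1
  rw [mul_zero, add_zero, one_rpow, zero_sub, ← div_neg, ← mul_neg, neg_sub]

lemma gaussianPDFReal_one_mul_exp_neg_mul_sq_le (c : ℝ) {t : ℝ} (ht : 0 ≤ t) (y : ℝ) :
    gaussianPDFReal c 1 y * rexp (-(t * y ^ 2)) ≤
      (√(2 * π))⁻¹ * rexp (-((1 + 2 * t) / 2) * (y - c / (1 + 2 * t)) ^ 2) := by
  have ha : 0 < 1 + 2 * t := by linarith
  -- completing the square in the exponent leaves the nonpositive term `-t c² / (1 + 2t)`
  have hsquare : -(y - c) ^ 2 / 2 - t * y ^ 2 =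
      -((1 + 2 * t) / 2) * (y - c / (1 + 2 * t)) ^ 2 - t * c ^ 2 / (1 + 2 * t) := by
    field_simp
    ring
  rw [gaussianPDFReal, NNReal.coe_one, mul_one, mul_one, mul_assoc, ← exp_add]
  gcongr
  have : 0 ≤ t * c ^ 2 / (1 + 2 * t) := by positivity
  linarith

lemma lintegral_exp_neg_mul_sq_gaussianReal_le (c : ℝ) {t : ℝ} (ht : 0 ≤ t) :
    ∫⁻ y, ENNReal.ofReal (rexp (-(t * y ^ 2))) ∂gaussianReal c 1 ≤
      ENNReal.ofReal ((1 + 2 * t) ^ (-(1 / 2) : ℝ)) := by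
  have ha : 0 < 1 + 2 * t := by linarith
  set g : ℝ → ℝ := fun y => (√(2 * π))⁻¹ * rexp (-((1 + 2 * t) / 2) * (y - c / (1 + 2 * t)) ^ 2)
  have hg : ∫ y, g y = (1 + 2 * t) ^ (-(1 / 2) : ℝ) := by
    rw [integral_const_mul, integral_sub_right_eq_self
      (fun y => rexp (-((1 + 2 * t) / 2) * y ^ 2)), integral_gaussian, div_div_eq_mul_div,
      sqrt_div' _ ha.le, mul_div_assoc', mul_comm π, inv_mul_cancel₀ (by positivity),
      rpow_neg ha.le, ← sqrt_eq_rpow, one_div]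
  have hg_int : Integrable g :=
    ((integrable_exp_neg_mul_sq (by positivity)).comp_sub_right _).const_mul _
  rw [gaussianReal_of_var_ne_zero c one_ne_zero,
    lintegral_withDensity_eq_lintegral_mul _ (measurable_gaussianPDF c 1) (by fun_prop), ← hg,
    ofReal_integral_eq_lintegral_ofReal hg_int (ae_of_all _ fun y => by positivity)]
  refine lintegral_mono fun y => ?_
  rw [Pi.mul_apply, gaussianPDF, ← ENNReal.ofReal_mul (gaussianPDFReal_nonneg c 1 y)]
  exact ENNReal.ofReal_le_ofReal (gaussianPDFReal_one_mul_exp_neg_mul_sq_le c ht y)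

variable {ι : Type*} [Fintype ι]

lemma lintegral_exp_neg_mul_sum_sq_pi_gaussianReal_le (θ : ι → ℝ) {t : ℝ} (ht : 0 ≤ t) :
    ∫⁻ x, ENNReal.ofReal (rexp (-(t * ∑ i, x i ^ 2))) ∂Measure.pi (fun i => gaussianReal (θ i) 1) ≤
      ENNReal.ofReal ((1 + 2 * t) ^ (-(Fintype.card ι / 2 : ℝ))) := by
  have hsplit : ∀ x : ι → ℝ, ENNReal.ofReal (rexp (-(t * ∑ i, x i ^ 2))) =
      ∏ i, ENNReal.ofReal (rexp (-(t * x i ^ 2))) := fun x => by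
    rw [← ENNReal.ofReal_prod_of_nonneg fun i _ => (exp_pos _).le, ← exp_sum, Finset.mul_sum,
      Finset.sum_neg_distrib]
  simp_rw [hsplit]
  rw [lintegral_fintype_prod_eq_prod (f := fun _ y => ENNReal.ofReal (rexp (-(t * y ^ 2))))
    fun _ => by fun_prop]
  calc ∏ i, ∫⁻ y, ENNReal.ofReal (rexp (-(t * y ^ 2))) ∂gaussianReal (θ i) 1
      ≤ ∏ _i : ι, ENNReal.ofReal ((1 + 2 * t) ^ (-(1 / 2) : ℝ)) :=
        Finset.prod_le_prod' fun i _ => lintegral_exp_neg_mul_sq_gaussianReal_le (θ i) ht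
    _ = ENNReal.ofReal ((1 + 2 * t) ^ (-(Fintype.card ι / 2 : ℝ))) := by
        rw [Finset.prod_const, Finset.card_univ, ← ENNReal.ofReal_pow (by positivity),
          ← rpow_natCast, ← rpow_mul (by positivity)]
        ring_nf

lemma lintegral_inv_sum_sq_pi_gaussianReal_le (hι : 2 < Fintype.card ι) (θ : ι → ℝ) :
    ∫⁻ x, ENNReal.ofReal (∑ i, x i ^ 2)⁻¹ ∂Measure.pi (fun i => gaussianReal (θ i) 1) ≤
      ENNReal.ofReal (1 / (Fintype.card ι - 2)) := by
  have hcard : (2 : ℝ) < Fintype.card ι := by exact_mod_cast hι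
  calc ∫⁻ x, ENNReal.ofReal (∑ i, x i ^ 2)⁻¹ ∂Measure.pi (fun i => gaussianReal (θ i) 1)
      ≤ ∫⁻ x, (ENNReal.ofReal (∑ i, x i ^ 2))⁻¹ ∂Measure.pi (fun i => gaussianReal (θ i) 1) :=
        lintegral_mono fun _ => ENNReal.ofReal_inv_le
    _ = ∫⁻ x, (∫⁻ t in Ioi (0 : ℝ), ENNReal.ofReal (rexp (-(t * ∑ i, x i ^ 2))))
          ∂Measure.pi (fun i => gaussianReal (θ i) 1) := by
        simp_rw [lintegral_exp_neg_mul_Ioi (Finset.sum_nonneg fun i _ => sq_nonneg _)]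
    _ = ∫⁻ t in Ioi (0 : ℝ), ∫⁻ x, ENNReal.ofReal (rexp (-(t * ∑ i, x i ^ 2)))
          ∂Measure.pi (fun i => gaussianReal (θ i) 1) :=
        lintegral_lintegral_swap (Measurable.aemeasurable (by fun_prop))
    _ ≤ ∫⁻ t in Ioi (0 : ℝ), ENNReal.ofReal ((1 + 2 * t) ^ (-(Fintype.card ι / 2 : ℝ))) :=
        setLIntegral_mono' measurableSet_Ioi fun t ht =>
          lintegral_exp_neg_mul_sum_sq_pi_gaussianReal_le θ (le_of_lt ht)
    _ = ENNReal.ofReal (1 / (Fintype.card ι - 2)) := by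
        rw [lintegral_one_add_two_mul_rpow_neg_Ioi (by linarith)]
        ring_nf

theorem integral_inv_sum_sq_pi_gaussianReal_le (hι : 2 < Fintype.card ι) (θ : ι → ℝ) :
    ∫ x, (∑ i, x i ^ 2)⁻¹ ∂Measure.pi (fun i => gaussianReal (θ i) 1) ≤
      1 / (Fintype.card ι - 2) := by
  have hcard : (2 : ℝ) < Fintype.card ι := by exact_mod_cast hι
  rw [integral_eq_lintegral_of_nonneg_ae (ae_of_all _ fun x => by positivity)
    (Measurable.aestronglyMeasurable (by fun_prop))]
  exact ENNReal.toReal_le_of_le_ofReal (by simp only [one_div, inv_nonneg]; linarith)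
    (lintegral_inv_sum_sq_pi_gaussianReal_le hι θ)

theorem integral_inv_normSq_noncentral_le_one
    (m : ℕ) (hm : 3 ≤ m) (θ : Fin m → ℝ)
    (μ : Measure (Fin m → ℝ))
    (hμ : μ = Measure.pi fun i : Fin m => gaussianReal (θ i) 1) :
    ∫ x, (∑ i, (x i) ^ 2)⁻¹ ∂μ ≤ 1 := by
  subst hμ
  have hm' : (3 : ℝ) ≤ m := by exact_mod_cast hm
  refine (integral_inv_sum_sq_pi_gaussianReal_le (by simp only [Fintype.card_fin]; omega) θ).trans ?_
  rw [Fintype.card_fin, div_le_one (by linarith)]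
  linarith
end

section
/- For every real number a, the function x ↦ 1/x² is not integrable with respect to the Gaussian measure gaussianReal a 1 on ℝ; equivalently, the lower Lebesgue integral ∫⁻ x⁻² d(gaussianReal a 1)(x) = ∞. -/
open MeasureTheory ProbabilityTheory

lemma measurable_inv_sq : Measurable (fun x : ℝ => 1 / x ^ 2) :=
  measurable_const.div (measurable_id.pow_const 2)

lemma lintegral_inv_sq_Ioo_top :
    ∫⁻ x in Set.Ioo (0:ℝ) 1, ENNReal.ofReal (1 / x ^ 2) = ⊤ := by
  by_contra h
  have hnn : 0 ≤ᵐ[volume.restrict (Set.Ioo (0:ℝ) 1)] fun x : ℝ => 1 / x ^ 2 := by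
    filter_upwards with x using by positivity
  have hint : IntegrableOn (fun x : ℝ => 1 / x ^ 2) (Set.Ioo (0:ℝ) 1) :=
    (lintegral_ofReal_ne_top_iff_integrable
      measurable_inv_sq.aestronglyMeasurable hnn).mp h
  have : IntegrableOn (fun x : ℝ => x ^ (-2 : ℝ)) (Set.Ioo (0:ℝ) 1) := by
    refine hint.congr_fun ?_ measurableSet_Ioo
    intro x hx
    show 1 / x ^ 2 = x ^ (-2 : ℝ)
    rw [Real.rpow_neg hx.1.le, Real.rpow_two, one_div]
  rw [intervalIntegral.integrableOn_Ioo_rpow_iff zero_lt_one] at this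
  linarith

theorem not_integrable_inv_sq_gaussian (a : ℝ) :
    ¬ Integrable (fun x : ℝ => 1 / x ^ 2) (gaussianReal a 1) ∧
      ∫⁻ x, ENNReal.ofReal (1 / x ^ 2) ∂(gaussianReal a 1) = ⊤ := by
  have hg : Measurable (fun x : ℝ => ENNReal.ofReal (1 / x ^ 2)) :=
    measurable_inv_sq.ennreal_ofReal
  have htop : ∫⁻ x, ENNReal.ofReal (1 / x ^ 2) ∂(gaussianReal a 1) = ⊤ := by
    rw [gaussianReal_of_var_ne_zero a one_ne_zero,
      lintegral_withDensity_eq_lintegral_mul _ (measurable_gaussianPDF a 1) hg]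
    rw [eq_top_iff]
    set c : ℝ := (Real.sqrt (2 * Real.pi))⁻¹ * Real.exp (-(1 + |a|) ^ 2 / 2) with hc
    have hcpos : 0 < c := by positivity
    have hpdf : ∀ x ∈ Set.Ioo (0:ℝ) 1, c ≤ gaussianPDFReal a 1 x := by
      intro x hx
      rw [gaussianPDFReal]
      simp only [NNReal.coe_one, mul_one]
      rw [hc]
      refine mul_le_mul_of_nonneg_left ?_ (by positivity)
      rw [Real.exp_le_exp]
      have h1 : |x - a| ≤ 1 + |a| :=
        calc |x - a| ≤ |x| + |a| := abs_sub x a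
          _ ≤ 1 + |a| := by
              gcongr
              rw [abs_of_pos hx.1]; exact hx.2.le
      have hsq : (x - a) ^ 2 ≤ (1 + |a|) ^ 2 :=
        calc (x - a) ^ 2 = |x - a| ^ 2 := (sq_abs _).symm
          _ ≤ (1 + |a|) ^ 2 := by gcongr
      linarith
    calc (⊤ : ENNReal)
        = ENNReal.ofReal c * ∫⁻ x in Set.Ioo (0:ℝ) 1, ENNReal.ofReal (1 / x ^ 2) := by
          rw [lintegral_inv_sq_Ioo_top,
            ENNReal.mul_top (ENNReal.ofReal_pos.mpr hcpos).ne']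
      _ = ∫⁻ x in Set.Ioo (0:ℝ) 1, ENNReal.ofReal c * ENNReal.ofReal (1 / x ^ 2) := by
          rw [lintegral_const_mul _ hg]
      _ ≤ ∫⁻ x in Set.Ioo (0:ℝ) 1,
            (gaussianPDF a 1 * fun x => ENNReal.ofReal (1 / x ^ 2)) x := by
          refine setLIntegral_mono ((measurable_gaussianPDF a 1).mul hg) ?_
          intro x hx
          simp only [Pi.mul_apply]
          gcongr
          exact ENNReal.ofReal_le_ofReal (hpdf x hx)
      _ ≤ ∫⁻ x, (gaussianPDF a 1 * fun x => ENNReal.ofReal (1 / x ^ 2)) x :=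
          setLIntegral_le_lintegral _ _
  refine ⟨fun hint => ?_, htop⟩
  have hnn : 0 ≤ᵐ[gaussianReal a 1] fun x : ℝ => 1 / x ^ 2 := by
    filter_upwards with x using by positivity
  exact (lintegral_ofReal_ne_top_iff_integrable hint.1 hnn).mpr hint htop
end

section
/- Let μ be the product measure on ℝ² of two copies of the Gaussian measure gaussianReal 1 1 (i.e. the distribution of X ~ N₂((1,1)ᵀ, I₂)). Then for every nonzero vector v ∈ ℝ², the lower Lebesgue integral ∫⁻ (v·x)⁻² dμ(x) = ∞, where v·x = v₁x₁ + v₂x₂ is the Euclidean inner product; in particular the function x ↦ 1/(v·x)² is not integrable with respect to μ. -/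
/-!
Restricted to the line through `x` in the direction of a coordinate `i` with `v i ≠ 0`, the
function `(v ⬝ᵥ x)⁻²` is `(a t + c)⁻²` with `a = v i ≠ 0`, which has a non-integrable pole at
`t = -c / a`. A nondegenerate Gaussian density is bounded below on the compact interval around
that pole, so every one-dimensional section integral is infinite, and Tonelli gives `∞`.
-/

open MeasureTheory ProbabilityTheory Filter Set Asymptotics Topology
open scoped ENNReal NNReal Interval

theorem not_intervalIntegrable_inv_sq_affine {a c s t : ℝ} (ha : a ≠ 0) (hst : s ≠ t)
    (hmem : -c / a ∈ [[s, t]]) :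
    ¬ IntervalIntegrable (fun x => 1 / (a * x + c) ^ 2) volume s t := by
  refine not_intervalIntegrable_of_sub_inv_isBigO_punctured ?_ hst hmem
  set x₀ := -c / a with hx₀
  have hlin : ∀ x, a * x + c = a * (x - x₀) := fun x => by
    rw [hx₀, mul_sub, mul_div_cancel₀ _ ha]; ring
  -- `(x - x₀)⁻¹ = a² (x - x₀) · (a x + c)⁻²`, and the first factor is bounded near `x₀`.
  have hbdd : (fun x => a ^ 2 * (x - x₀)) =O[𝓝[≠] x₀] (fun _ => (1 : ℝ)) :=
    (Continuous.tendsto (by fun_prop) x₀).mono_left nhdsWithin_le_nhds |>.isBigO_one ℝ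
  refine ((hbdd.mul (isBigO_refl (fun x => 1 / (a * x + c) ^ 2) _)).congr' ?_ ?_)
  · filter_upwards [self_mem_nhdsWithin] with x hx
    have hx' : x - x₀ ≠ 0 := sub_ne_zero.2 hx
    rw [hlin]; field_simp
  · simp

theorem setLIntegral_Icc_inv_sq_affine_eq_top {a c s t : ℝ} (ha : a ≠ 0) (hst : s < t)
    (hmem : -c / a ∈ Icc s t) :
    ∫⁻ x in Icc s t, ENNReal.ofReal (1 / (a * x + c) ^ 2) = ⊤ := by
  by_contra h
  have hint : IntegrableOn (fun x => 1 / (a * x + c) ^ 2) (Icc s t) :=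
    (lintegral_ofReal_ne_top_iff_integrable (Measurable.aestronglyMeasurable (by fun_prop))
      (ae_of_all _ fun x => by positivity)).1 h
  refine not_intervalIntegrable_inv_sq_affine ha hst.ne ?_
    ((intervalIntegrable_iff_integrableOn_Icc_of_le hst.le).2 hint)
  rwa [uIcc_of_le hst.le]

theorem lintegral_eq_top_of_smul_le {α : Type*} [MeasurableSpace α] {μ ν : Measure α}
    {c : ℝ≥0∞} (hc : c ≠ 0) (hle : c • ν ≤ μ) {f : α → ℝ≥0∞} (hf : ∫⁻ x, f x ∂ν = ⊤) :
    ∫⁻ x, f x ∂μ = ⊤ :=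
  eq_top_iff.2 <| calc
    ⊤ = ∫⁻ x, f x ∂(c • ν) := by rw [lintegral_smul_measure, hf, smul_eq_mul, ENNReal.mul_top hc]
    _ ≤ ∫⁻ x, f x ∂μ := lintegral_mono' hle le_rfl

theorem exists_smul_restrict_Icc_le_gaussianReal (m : ℝ) {v : ℝ≥0} (hv : v ≠ 0) {s t : ℝ}
    (hst : s ≤ t) : ∃ c : ℝ≥0∞, c ≠ 0 ∧ c • volume.restrict (Icc s t) ≤ gaussianReal m v := by
  obtain ⟨y, -, hy⟩ := isCompact_Icc.exists_isMinOn (nonempty_Icc.2 hst)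
    (Continuous.continuousOn (f := gaussianPDFReal m v) (by unfold gaussianPDFReal; fun_prop))
  refine ⟨gaussianPDF m v y, by simpa [gaussianPDF] using gaussianPDFReal_pos m v y hv, ?_⟩
  rw [gaussianReal_of_var_ne_zero m hv, ← withDensity_const,
    ← withDensity_indicator measurableSet_Icc]
  refine withDensity_mono (ae_of_all _ fun x => ?_)
  by_cases hx : x ∈ Icc s t
  · simpa [indicator_of_mem hx, gaussianPDF] using ENNReal.ofReal_le_ofReal (hy hx)
  · simp [indicator_of_notMem hx]

theorem lintegral_inv_sq_affine_gaussianReal_eq_top (m : ℝ) {v : ℝ≥0} (hv : v ≠ 0) {a : ℝ}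
    (ha : a ≠ 0) (c : ℝ) :
    ∫⁻ x, ENNReal.ofReal (1 / (a * x + c) ^ 2) ∂gaussianReal m v = ⊤ := by
  obtain ⟨d, hd, hle⟩ :=
    exists_smul_restrict_Icc_le_gaussianReal m hv (by linarith : -c / a ≤ -c / a + 1)
  exact lintegral_eq_top_of_smul_le hd hle <|
    setLIntegral_Icc_inv_sq_affine_eq_top ha (by linarith) ⟨le_rfl, by linarith⟩

theorem lintegral_prod_eq_top_of_forall_lintegral_eq_top {α β : Type*} [MeasurableSpace α]
    [MeasurableSpace β] {μ : Measure α} {ν : Measure β} [SFinite μ] [SFinite ν] (hν : ν ≠ 0)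
    {f : α × β → ℝ≥0∞} (hf : Measurable f) (h : ∀ y, ∫⁻ x, f (x, y) ∂μ = ⊤) :
    ∫⁻ p, f p ∂(μ.prod ν) = ⊤ := by
  simp [lintegral_prod_symm' f hf, h, hν]

theorem lintegral_inv_sq_dotProduct_pi_gaussianReal_eq_top {n : ℕ} (m : Fin n → ℝ)
    (var : Fin n → ℝ≥0) (hvar : ∀ i, var i ≠ 0) {v : Fin n → ℝ} (hv : v ≠ 0) :
    ∫⁻ x, ENNReal.ofReal (1 / (∑ i, v i * x i) ^ 2)
      ∂Measure.pi (fun i => gaussianReal (m i) (var i)) = ⊤ := by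
  obtain ⟨i, hi : v i ≠ 0⟩ := Function.ne_iff.1 hv
  cases n with
  | zero => exact i.elim0
  | succ n =>
    have hsplit := (measurePreserving_piFinSuccAbove (fun i => gaussianReal (m i) (var i)) i).symm
    rw [← hsplit.lintegral_comp_emb (MeasurableEquiv.measurableEmbedding _)]
    refine lintegral_prod_eq_top_of_forall_lintegral_eq_top (IsProbabilityMeasure.ne_zero _)
      (by fun_prop) fun z => ?_
    simpa [Fin.sum_univ_succAbove _ i] using
      lintegral_inv_sq_affine_gaussianReal_eq_top (m i) (hvar i) hi _

theorem lintegral_inv_sq_dotProduct_eq_top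
    (μ : Measure (Fin 2 → ℝ))
    (hμ : μ = Measure.pi fun _ : Fin 2 => gaussianReal 1 1)
    (v : Fin 2 → ℝ) (hv : v ≠ 0) :
    ∫⁻ x, ENNReal.ofReal (1 / (∑ i, v i * x i) ^ 2) ∂μ = ⊤ ∧
      ¬ Integrable (fun x : Fin 2 → ℝ => 1 / (∑ i, v i * x i) ^ 2) μ := by
  subst hμ
  have htop := lintegral_inv_sq_dotProduct_pi_gaussianReal_eq_top (fun _ => 1) (fun _ => 1)
    (fun _ => one_ne_zero) hv
  exact ⟨htop, fun hint => hint.lintegral_lt_top.ne htop⟩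
end
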